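/- arXiv:2308.08533 — 6 statements merged into one kernel-verified Lean document; each statement's English description precedes it below -/
import Mathlib

section
/- The similitude group T_𝕊 = {A ∈ M₂(F) : det A ≠ 0 and (transpose A)·𝕊·A = (det A)·𝕊} is exactly the set {M(x,y) : x, y ∈ F, x² + (b/c)·x·y + (a/c)·y² ≠ 0}; that is, an invertible 2×2 matrix A over F satisfies (transpose A)·𝕊·A = (det A)·𝕊 if and only if A = M(x,y) for some x, y ∈ F (necessarily with det M(x,y) ≠ 0). -/
/-!
With `ω = !![0, 1; -1, 0]`, every `2 × 2` matrix satisfies `ω Aᵀ = adj(A) ω`, so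
`ω (Aᵀ 𝕊 A) = adj(A) (ω 𝕊) A`. For invertible `A` the similitude condition
`Aᵀ 𝕊 A = det(A) 𝕊` is therefore equivalent to `A` commuting with `ω 𝕊 = !![b/2, c; -a, -b/2]`.
Since `c ≠ 0` this matrix is not scalar, so its centralizer is the pencil `x + y ω 𝕊`, which is
the family `M(x,y)` after an invertible linear change of the parameters.
-/

open Matrix

/-- The parametrizing matrices `M(x,y)` of the similitude group of `𝕊`. -/
def Mmat {F : Type*} [Field F] (a b c x y : F) : Matrix (Fin 2) (Fin 2) F :=
  !![x + y * b * c⁻¹, y; -y * a * c⁻¹, x]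

namespace Matrix

section CommRing

variable {R : Type*} [CommRing R]

variable (R) in
def symplecticForm : Matrix (Fin 2) (Fin 2) R := !![0, 1; -1, 0]

theorem symplecticForm_mul_self : symplecticForm R * symplecticForm R = -1 := by
  ext i j; fin_cases i <;> fin_cases j <;> simp [symplecticForm]

theorem symplecticForm_mul_transpose (A : Matrix (Fin 2) (Fin 2) R) :
    symplecticForm R * Aᵀ = adjugate A * symplecticForm R := by
  rw [adjugate_fin_two, eta_fin_two A]
  ext i j; fin_cases i <;> fin_cases j <;> simp [symplecticForm, vecMul, dotProduct]

theorem adjugate_mul_mul_eq_det_smul_iff_commute {n : Type*} [Fintype n] [DecidableEq n]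
    {A : Matrix n n R} (hA : IsUnit A.det) (K : Matrix n n R) :
    adjugate A * K * A = A.det • K ↔ Commute K A := by
  constructor
  · intro h
    have : A.det • (K * A) = A.det • (A * K) :=
      calc A.det • (K * A) = A * adjugate A * (K * A) := by rw [mul_adjugate, smul_one_mul]
        _ = A.det • (A * K) := by
          rw [mul_assoc A, ← mul_assoc (adjugate A), h, mul_smul_comm]
    exact hA.smul_left_cancel.mp this
  · intro h
    rw [mul_assoc, h.eq, ← mul_assoc, adjugate_mul, smul_one_mul]

theorem transpose_mul_mul_eq_det_smul_iff_commute {A : Matrix (Fin 2) (Fin 2) R}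
    (hA : IsUnit A.det) (S : Matrix (Fin 2) (Fin 2) R) :
    Aᵀ * S * A = A.det • S ↔ Commute (symplecticForm R * S) A := by
  have hcancel : Function.Injective (symplecticForm R * ·) := fun X Y h => by
    simpa [← mul_assoc, symplecticForm_mul_self] using congrArg (-symplecticForm R * ·) h
  rw [← adjugate_mul_mul_eq_det_smul_iff_commute hA, ← hcancel.eq_iff, mul_smul_comm,
    ← mul_assoc, ← mul_assoc, symplecticForm_mul_transpose, mul_assoc (adjugate A)]

end CommRing

theorem commute_iff_exists_eq_smul_one_add_smul {F : Type*} [Field F]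
    {K : Matrix (Fin 2) (Fin 2) F} (hK : K 0 1 ≠ 0) (A : Matrix (Fin 2) (Fin 2) F) :
    Commute K A ↔ ∃ x y : F, A = x • 1 + y • K := by
  constructor
  · intro h
    have h00 := congrFun (congrFun h.eq 0) 0
    have h01 := congrFun (congrFun h.eq 0) 1
    simp only [mul_apply, Fin.sum_univ_two] at h00 h01
    refine ⟨A 0 0 - A 0 1 / K 0 1 * K 0 0, A 0 1 / K 0 1, ?_⟩
    ext i j; fin_cases i <;> fin_cases j <;> simp <;> field_simp
    · linear_combination h00
    · linear_combination h01
  · rintro ⟨x, y, rfl⟩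
    exact ((Commute.one_right K).smul_right x).add_right ((Commute.refl K).smul_right y)

end Matrix

section Similitude

variable {F : Type*} [Field F] {a b c : F}

theorem exists_eq_Mmat_iff (h2 : (2 : F) ≠ 0) (hc : c ≠ 0) (A : Matrix (Fin 2) (Fin 2) F) :
    (∃ x y, A = Mmat a b c x y) ↔
      ∃ x y : F, A = x • 1 + y • (symplecticForm F * !![a, b / 2; b / 2, c]) := by
  constructor
  · rintro ⟨x, y, rfl⟩
    refine ⟨x + y * b / (2 * c), y / c, ?_⟩
    ext i j; fin_cases i <;> fin_cases j <;> simp [Mmat, symplecticForm] <;> field_simp <;> ring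
  · rintro ⟨x, y, rfl⟩
    refine ⟨x - y * b / 2, y * c, ?_⟩
    ext i j; fin_cases i <;> fin_cases j <;> simp [Mmat, symplecticForm] <;> field_simp <;> ring

theorem det_Mmat (hc : c ≠ 0) (x y : F) :
    (Mmat a b c x y).det = x ^ 2 + b / c * x * y + a / c * y ^ 2 := by
  rw [Mmat, det_fin_two_of]
  field_simp
  ring

theorem transpose_mul_mul_eq_det_smul_iff_exists_eq_Mmat (h2 : (2 : F) ≠ 0) (hc : c ≠ 0)
    {A : Matrix (Fin 2) (Fin 2) F} (hA : A.det ≠ 0) :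
    Aᵀ * !![a, b / 2; b / 2, c] * A = A.det • !![a, b / 2; b / 2, c] ↔
      ∃ x y, A = Mmat a b c x y := by
  rw [transpose_mul_mul_eq_det_smul_iff_commute hA.isUnit,
    commute_iff_exists_eq_smul_one_add_smul (by simpa [symplecticForm]), exists_eq_Mmat_iff h2 hc]

end Similitude

theorem similitude_group_eq_torus_general {F : Type*} [Field F] (h2 : (2 : F) ≠ 0)
    (a b c : F) (hc : c ≠ 0) :
    {A : Matrix (Fin 2) (Fin 2) F |
        A.det ≠ 0 ∧ Aᵀ * !![a, b / 2; b / 2, c] * A = A.det • !![a, b / 2; b / 2, c]}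
      = {A : Matrix (Fin 2) (Fin 2) F |
          ∃ x y : F, x ^ 2 + (b / c) * x * y + (a / c) * y ^ 2 ≠ 0 ∧ A = Mmat a b c x y} := by
  ext A
  constructor
  · rintro ⟨hdet, hA⟩
    obtain ⟨x, y, rfl⟩ := (transpose_mul_mul_eq_det_smul_iff_exists_eq_Mmat h2 hc hdet).mp hA
    exact ⟨x, y, det_Mmat hc x y ▸ hdet, rfl⟩
  · rintro ⟨x, y, hxy, rfl⟩
    have hdet : (Mmat a b c x y).det ≠ 0 := (det_Mmat hc x y).symm ▸ hxy
    exact ⟨hdet, (transpose_mul_mul_eq_det_smul_iff_exists_eq_Mmat h2 hc hdet).mpr ⟨x, y, rfl⟩⟩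

/-- The similitude group `T_𝕊` of `𝕊 = !![a, b/2; b/2, c]` consists exactly of the matrices
`M(x,y)` with nonzero determinant `x² + (b/c)xy + (a/c)y²`. -/
theorem similitude_group_eq_torus {F : Type*} [Field F] (h2 : (2 : F) ≠ 0)
    (a b c : F) (hc : c ≠ 0) (hdisc : b ^ 2 - 4 * a * c ≠ 0) :
    {A : Matrix (Fin 2) (Fin 2) F |
        A.det ≠ 0 ∧ Aᵀ * !![a, b / 2; b / 2, c] * A = A.det • !![a, b / 2; b / 2, c]}
      = {A : Matrix (Fin 2) (Fin 2) F |
          ∃ x y : F, x ^ 2 + (b / c) * x * y + (a / c) * y ^ 2 ≠ 0 ∧ A = Mmat a b c x y} :=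
  similitude_group_eq_torus_general h2 a b c hc
end

section
/- Let c > 0 be real and let A, B be complex numbers with Re A > 0 and Re(A − B) > 1. Then the function (λ, y) ↦ λ^(A−1)·(y² + y⁻²)^B·exp(−c·λ·(y² + y⁻²))·(y − y⁻³) is integrable on (0, ∞) × (1, ∞), and ∫₀^∞ ∫₁^∞ λ^(A−1) (y² + y⁻²)^B e^(−c·λ·(y²+y⁻²)) (y − y⁻³) dy dλ = Γ(A) · c^(−A) · 2^(B−A) / (A − B − 1), where Γ is the complex Gamma function. -/
/-!
By Fubini, integrate in `λ` first: for fixed `y` this is a Gamma integral, equal to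
`Γ(A) (c g(y))^(-A)` times the remaining factors, where `g(y) = y² + y⁻²`. As
`g'(y) = 2(y - y⁻³)` and `g` maps `(1, ∞)` increasingly onto `(2, ∞)`, the substitution
`u = g(y)` turns the `y`-integral into `½ ∫₂^∞ u^(B-A) du = 2^(B-A) / (A - B - 1)`.
Integrability follows from the same computation for the absolute value of the integrand, which is
the integrand with `A, B` replaced by `Re A, Re B`.
-/

open MeasureTheory Complex Set

namespace DoubleIntegralGamma

noncomputable def sqAddInvSq (y : ℝ) : ℝ := y ^ 2 + (y ^ 2)⁻¹

lemma hasDerivAt_sqAddInvSq {y : ℝ} (hy : y ≠ 0) :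
    HasDerivAt sqAddInvSq (2 * (y - (y ^ 3)⁻¹)) y := by
  have hsq : HasDerivAt (fun y : ℝ => y ^ 2) (2 * y) y := by simpa using hasDerivAt_pow 2 y
  refine (hsq.add (hsq.inv (pow_ne_zero 2 hy))).congr_deriv ?_
  field_simp
  ring

lemma sqAddInvSq_pos {y : ℝ} (hy : y ≠ 0) : 0 < sqAddInvSq y := by
  unfold sqAddInvSq; positivity

lemma sub_inv_pow_three_pos {y : ℝ} (hy : 1 < y) : 0 < y - (y ^ 3)⁻¹ := by
  have : (y ^ 3)⁻¹ < 1 := inv_lt_one_of_one_lt₀ (one_lt_pow₀ hy (by norm_num))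
  linarith

lemma continuousOn_sqAddInvSq {s : Set ℝ} (hs : ∀ y ∈ s, y ≠ 0) :
    ContinuousOn sqAddInvSq s :=
  fun y hy => (hasDerivAt_sqAddInvSq (hs y hy)).continuousAt.continuousWithinAt

lemma strictMonoOn_sqAddInvSq : StrictMonoOn sqAddInvSq (Ici 1) := by
  refine strictMonoOn_of_deriv_pos (convex_Ici 1)
    (continuousOn_sqAddInvSq fun y hy => (zero_lt_one.trans_le hy).ne') fun y hy => ?_
  rw [interior_Ici] at hy
  rw [(hasDerivAt_sqAddInvSq (zero_lt_one.trans hy).ne').deriv]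
  linarith [sub_inv_pow_three_pos hy]

lemma image_sqAddInvSq_Ioi_one : sqAddInvSq '' Ioi 1 = Ioi 2 := by
  have h1 : sqAddInvSq 1 = 2 := by norm_num [sqAddInvSq]
  refine Subset.antisymm ?_ fun u (hu : 2 < u) => ?_
  · rintro _ ⟨y, hy, rfl⟩
    exact h1 ▸ strictMonoOn_sqAddInvSq self_mem_Ici (Ioi_subset_Ici_self hy) hy
  · have hlt : u < sqAddInvSq u := by
      have : (0 : ℝ) < (u ^ 2)⁻¹ := by positivity
      unfold sqAddInvSq; nlinarith
    obtain ⟨y, hy, rfl⟩ := intermediate_value_Ioo (by linarith : (1 : ℝ) ≤ u)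
      (continuousOn_sqAddInvSq fun y hy => (zero_lt_one.trans_le hy.1).ne') ⟨h1 ▸ hu, hlt⟩
    exact ⟨y, hy.1, rfl⟩

lemma hasDerivWithinAt_sqAddInvSq_Ioi {y : ℝ} (hy : y ∈ Ioi 1) :
    HasDerivWithinAt sqAddInvSq (2 * (y - (y ^ 3)⁻¹)) (Ioi 1) y :=
  (hasDerivAt_sqAddInvSq (zero_lt_one.trans hy).ne').hasDerivWithinAt

lemma abs_deriv_sqAddInvSq {y : ℝ} (hy : y ∈ Ioi 1) :
    |2 * (y - (y ^ 3)⁻¹)| = 2 * (y - (y ^ 3)⁻¹) :=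
  abs_of_pos (mul_pos two_pos (sub_inv_pow_three_pos hy))

section Substitution

variable {E : Type*} [NormedAddCommGroup E] [NormedSpace ℝ E]

lemma integrableOn_comp_sqAddInvSq_iff (F : ℝ → E) :
    IntegrableOn (fun y => (2 * (y - (y ^ 3)⁻¹)) • F (sqAddInvSq y)) (Ioi 1) ↔
      IntegrableOn F (Ioi 2) := by
  rw [← image_sqAddInvSq_Ioi_one, integrableOn_image_iff_integrableOn_abs_deriv_smul
    measurableSet_Ioi (fun y => hasDerivWithinAt_sqAddInvSq_Ioi)
    (strictMonoOn_sqAddInvSq.mono Ioi_subset_Ici_self).injOn]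
  exact integrableOn_congr_fun (fun y hy => by rw [abs_deriv_sqAddInvSq hy]) measurableSet_Ioi

lemma integral_comp_sqAddInvSq (F : ℝ → E) :
    ∫ y in Ioi 1, (2 * (y - (y ^ 3)⁻¹)) • F (sqAddInvSq y) = ∫ u in Ioi 2, F u := by
  rw [← image_sqAddInvSq_Ioi_one, integral_image_eq_integral_abs_deriv_smul
    measurableSet_Ioi (fun y => hasDerivWithinAt_sqAddInvSq_Ioi)
    (strictMonoOn_sqAddInvSq.mono Ioi_subset_Ici_self).injOn]
  exact setIntegral_congr_fun measurableSet_Ioi fun y hy => by rw [abs_deriv_sqAddInvSq hy]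

end Substitution

lemma integrableOn_sqAddInvSq_cpow_mul {s : ℂ} (hs : s.re < -1) :
    IntegrableOn (fun y : ℝ => ((y - (y ^ 3)⁻¹ : ℝ) : ℂ) * (sqAddInvSq y : ℂ) ^ s)
      (Ioi 1) := by
  have h := (integrableOn_comp_sqAddInvSq_iff fun u : ℝ => (u : ℂ) ^ s).2
    (integrableOn_Ioi_cpow_of_lt hs two_pos)
  refine IntegrableOn.congr_fun (h.const_mul (1 / 2 : ℂ)) (fun y _ => ?_) measurableSet_Ioi
  simp only [real_smul, ofReal_mul, ofReal_ofNat]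
  ring

lemma integral_sqAddInvSq_cpow_mul {s : ℂ} (hs : s.re < -1) :
    ∫ y in Ioi 1, ((y - (y ^ 3)⁻¹ : ℝ) : ℂ) * (sqAddInvSq y : ℂ) ^ s
      = -2 ^ s / (s + 1) := by
  have h := integral_comp_sqAddInvSq fun u : ℝ => (u : ℂ) ^ s
  simp only [real_smul, ofReal_mul, ofReal_ofNat, mul_assoc, integral_const_mul,
    integral_Ioi_cpow_of_lt hs two_pos] at h
  have hs1 : s + 1 ≠ 0 := fun h => by
    have := congrArg re h
    simp only [add_re, one_re, zero_re] at this
    linarith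
  rw [cpow_add _ _ two_ne_zero, cpow_one] at h
  rw [eq_div_iff hs1] at h ⊢
  linear_combination h / 2

lemma integrableOn_cpow_mul_exp_neg_mul_Ioi {a : ℂ} {r : ℝ} (ha : 0 < a.re) (hr : 0 < r) :
    IntegrableOn (fun t : ℝ => (t : ℂ) ^ (a - 1) * exp (-(r * t))) (Ioi 0) := by
  -- a non-integrable function would have integral `0`, whereas this one is `(1 / r) ^ a * Γ(a)`
  refine Integrable.of_integral_ne_zero ?_
  rw [integral_cpow_mul_exp_neg_mul_Ioi ha hr]
  exact mul_ne_zero (by simp [cpow_eq_zero_iff, hr.ne']) (Gamma_ne_zero_of_re_pos ha)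

noncomputable def integrand (c : ℝ) (A B : ℂ) (l y : ℝ) : ℂ :=
  (l : ℂ) ^ (A - 1) * ((sqAddInvSq y : ℝ) : ℂ) ^ B
    * ((Real.exp (-(c * l * sqAddInvSq y)) : ℝ) : ℂ) * ((y - (y ^ 3)⁻¹ : ℝ) : ℂ)

lemma continuousOn_integrand (c : ℝ) (A B : ℂ) :
    ContinuousOn (Function.uncurry (integrand c A B)) (Ioi 0 ×ˢ Ioi 1) := by
  rintro ⟨l, y⟩ ⟨hl : 0 < l, hy : 1 < y⟩
  have hy0 : 0 < y := zero_lt_one.trans hy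
  refine ContinuousAt.continuousWithinAt ?_
  simp only [Function.uncurry_def, integrand, sqAddInvSq]
  fun_prop (disch := first | exact ofReal_mem_slitPlane.2 (by positivity) | positivity)

lemma integrand_eq_mul (c : ℝ) (A B : ℂ) (l y : ℝ) :
    integrand c A B l y = (l : ℂ) ^ (A - 1) * exp (-((c * sqAddInvSq y : ℝ) * l))
      * (((y - (y ^ 3)⁻¹ : ℝ) : ℂ) * (sqAddInvSq y : ℂ) ^ B) := by
  rw [integrand, ofReal_exp]
  push_cast
  ring_nf

section Fiber

variable {c : ℝ} {A B : ℂ} {y : ℝ}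

lemma integrableOn_integrand_left (hc : 0 < c) (hA : 0 < A.re) (hy : y ≠ 0) :
    IntegrableOn (fun l => integrand c A B l y) (Ioi 0) := by
  simp only [integrand_eq_mul]
  exact (integrableOn_cpow_mul_exp_neg_mul_Ioi hA (mul_pos hc (sqAddInvSq_pos hy))).mul_const _

lemma integral_integrand_left (hc : 0 < c) (hA : 0 < A.re) (hy : y ≠ 0) :
    ∫ l in Ioi 0, integrand c A B l y
      = Gamma A * c ^ (-A)
        * (((y - (y ^ 3)⁻¹ : ℝ) : ℂ) * (sqAddInvSq y : ℂ) ^ (B - A)) := by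
  have hg := sqAddInvSq_pos hy
  have harg : ((c * sqAddInvSq y : ℝ) : ℂ).arg ≠ Real.pi := by
    rw [arg_ofReal_of_nonneg (by positivity)]
    exact Real.pi_ne_zero.symm
  simp only [integrand_eq_mul]
  rw [integral_mul_const, integral_cpow_mul_exp_neg_mul_Ioi hA (by positivity), one_div,
    inv_cpow _ _ harg, ← cpow_neg, ofReal_mul, mul_cpow_ofReal_nonneg hc.le hg.le,
    sub_eq_add_neg B A, cpow_add _ _ (ofReal_ne_zero.2 hg.ne')]
  ring

lemma norm_integrand {l : ℝ} (hl : 0 < l) (hy : 1 < y) :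
    (‖integrand c A B l y‖ : ℂ) = integrand c A.re B.re l y := by
  have hg := sqAddInvSq_pos (zero_lt_one.trans hy).ne'
  simp only [integrand, norm_mul, norm_cpow_eq_rpow_re_of_pos hl,
    norm_cpow_eq_rpow_re_of_pos hg, norm_real, Real.norm_of_nonneg (Real.exp_pos _).le,
    Real.norm_of_nonneg (sub_inv_pow_three_pos hy).le]
  push_cast
  rw [ofReal_cpow hl.le, ofReal_cpow hg.le]
  simp

lemma integral_norm_integrand_left (hc : 0 < c) (hA : 0 < A.re) (hy : 1 < y) :
    ((∫ l in Ioi 0, ‖integrand c A B l y‖ : ℝ) : ℂ)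
      = Gamma A.re * c ^ (-(A.re : ℂ))
        * (((y - (y ^ 3)⁻¹ : ℝ) : ℂ) * (sqAddInvSq y : ℂ) ^ ((B.re : ℂ) - A.re)) := by
  rw [← integral_complex_ofReal,
    setIntegral_congr_fun measurableSet_Ioi fun l hl => norm_integrand hl hy]
  exact integral_integrand_left hc (by simpa using hA) (zero_lt_one.trans hy).ne'

end Fiber

lemma integrableOn_integrand {c : ℝ} {A B : ℂ} (hc : 0 < c) (hA : 0 < A.re)
    (hAB : (B - A).re < -1) :
    IntegrableOn (Function.uncurry (integrand c A B)) (Ioi 0 ×ˢ Ioi 1) := by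
  have hmeas := (continuousOn_integrand c A B).aestronglyMeasurable
    (μ := volume) (measurableSet_Ioi.prod measurableSet_Ioi)
  rw [Measure.volume_eq_prod, ← Measure.prod_restrict] at hmeas
  rw [IntegrableOn, Measure.volume_eq_prod, ← Measure.prod_restrict]
  refine (integrable_prod_iff' hmeas).2 ⟨(ae_restrict_iff' measurableSet_Ioi).2
    (.of_forall fun y hy => integrableOn_integrand_left hc hA (zero_lt_one.trans hy).ne'), ?_⟩
  have h := (integrableOn_sqAddInvSq_cpow_mul (s := (B.re : ℂ) - A.re)
    (by simpa using hAB)).const_mul (Gamma A.re * c ^ (-(A.re : ℂ)))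
  refine IntegrableOn.congr_fun h.re (fun y hy => ?_) measurableSet_Ioi
  rw [← integral_norm_integrand_left hc hA hy]
  exact ofReal_re _

end DoubleIntegralGamma

open DoubleIntegralGamma

/-- The double integral of equation (2.2.8) of the paper:
`∫₀^∞ ∫₁^∞ λ^(A−1)(y²+y⁻²)^B e^(−cλ(y²+y⁻²))(y−y⁻³) dy dλ = Γ(A)·c^(−A)·2^(B−A)/(A−B−1)`. -/
theorem double_integral_gamma (c : ℝ) (hc : 0 < c) (A B : ℂ)
    (hA : 0 < A.re) (hAB : 1 < (A - B).re) :
    IntegrableOn (fun p : ℝ × ℝ =>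
        ((p.1 : ℂ) ^ (A - 1)) * (((p.2 ^ 2 + (p.2 ^ 2)⁻¹ : ℝ) : ℂ) ^ B)
          * ((Real.exp (-(c * p.1 * (p.2 ^ 2 + (p.2 ^ 2)⁻¹))) : ℝ) : ℂ)
          * ((p.2 - (p.2 ^ 3)⁻¹ : ℝ) : ℂ))
      (Set.Ioi 0 ×ˢ Set.Ioi 1) ∧
    (∫ l in Set.Ioi (0 : ℝ), ∫ y in Set.Ioi (1 : ℝ),
        ((l : ℂ) ^ (A - 1)) * (((y ^ 2 + (y ^ 2)⁻¹ : ℝ) : ℂ) ^ B)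
          * ((Real.exp (-(c * l * (y ^ 2 + (y ^ 2)⁻¹))) : ℝ) : ℂ)
          * ((y - (y ^ 3)⁻¹ : ℝ) : ℂ))
      = Complex.Gamma A * (c : ℂ) ^ (-A) * 2 ^ (B - A) / (A - B - 1) := by
  have hBA : (B - A).re < -1 := by
    simp only [sub_re] at hAB ⊢
    linarith
  have hint := integrableOn_integrand hc hA hBA
  refine ⟨hint, ?_⟩
  rw [IntegrableOn, Measure.volume_eq_prod, ← Measure.prod_restrict] at hint
  calc ∫ l in Ioi 0, ∫ y in Ioi 1, integrand c A B l y
      = ∫ y in Ioi 1, ∫ l in Ioi 0, integrand c A B l y := integral_integral_swap hint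
    _ = ∫ y in Ioi 1, Gamma A * c ^ (-A)
          * (((y - (y ^ 3)⁻¹ : ℝ) : ℂ) * (sqAddInvSq y : ℂ) ^ (B - A)) :=
        setIntegral_congr_fun measurableSet_Ioi fun y hy =>
          integral_integrand_left hc hA (zero_lt_one.trans hy).ne'
    _ = Gamma A * c ^ (-A) * (-2 ^ (B - A) / (B - A + 1)) := by
        rw [integral_const_mul, integral_sqAddInvSq_cpow_mul hBA]
    _ = _ := by rw [neg_div, ← div_neg, neg_add', neg_sub, mul_div_assoc]
end

section
/- Let K/F be a Galois field extension of degree 2 with nontrivial automorphism σ, and J = !![0, 1; −1, 0]. Suppose h ∈ M₂(K) satisfies (transpose σ(h))·J·h = ν·J for some ν ∈ F with ν ≠ 0. Then there exist a ∈ K with a ≠ 0 and g ∈ GL₂(F) such that h = a·g; moreover ν = a·σ(a)·det g. Conversely, every matrix of the form a·g with a ∈ K^× and g ∈ GL₂(F) satisfies the relation with ν = a·σ(a)·det g. Hence the F-points of the unitary similitude group GU(1,1) are exactly K^×·GL₂(F). -/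
/-!
For a `2 × 2` matrix `B` one has `Bᵀ J = J adj(B)`, so `(h^σ)ᵀ J h = ν J` with `ν ≠ 0` forces
`det(h^σ) • h = ν • h^σ`, i.e. `h^σ = t • h` for a scalar `t`; applying `σ` once more gives
`t σ(t) = 1`. Hilbert's Theorem 90 for `K/F` then yields `a ≠ 0` with `σ a = t a`, so `a⁻¹ h`
is fixed by `σ` and has entries in `F`. The factor `ν` and the converse both come from
`gᵀ J g = det g • J`.
-/

open Matrix

local notation "𝕁" => !![0, 1; -1, 0]

section J

variable {R : Type*} [CommRing R]

theorem transpose_mul_J (A : Matrix (Fin 2) (Fin 2) R) : Aᵀ * 𝕁 = 𝕁 * A.adjugate := by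
  rw [adjugate_fin_two]
  ext i j
  fin_cases i <;> fin_cases j <;> simp [mul_apply, Fin.sum_univ_two]

theorem transpose_mul_J_mul_self (A : Matrix (Fin 2) (Fin 2) R) : Aᵀ * 𝕁 * A = A.det • 𝕁 := by
  rw [transpose_mul_J, Matrix.mul_assoc, adjugate_mul, Matrix.mul_smul, Matrix.mul_one]

theorem J_mul_J : (𝕁 : Matrix (Fin 2) (Fin 2) R) * 𝕁 = -1 := by
  ext i j
  fin_cases i <;> fin_cases j <;> simp

theorem det_smul_eq_smul_of_transpose_mul_J_mul {A B : Matrix (Fin 2) (Fin 2) R} {c : R}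
    (h : Bᵀ * 𝕁 * A = c • 𝕁) : B.det • A = c • B := by
  have hJ : 𝕁 * (B.adjugate * A) = 𝕁 * (c • 1) := by
    rw [← Matrix.mul_assoc, ← transpose_mul_J, h, Matrix.mul_smul, Matrix.mul_one]
  have hadj : B.adjugate * A = c • 1 := by
    have := congrArg (fun X => 𝕁 * X) hJ
    simpa only [← Matrix.mul_assoc, J_mul_J, neg_mul, Matrix.one_mul, neg_inj] using this
  rw [← Matrix.one_mul A, ← smul_mul, ← mul_adjugate, Matrix.mul_assoc, hadj, Matrix.mul_smul,
    Matrix.mul_one]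

end J

theorem exists_ne_zero_apply_eq_mul {K G : Type*} [Field K] [FunLike G K K] [RingHomClass G K K]
    {σ : G} (hσ : ∃ b, σ b ≠ b) (hσσ : ∀ x, σ (σ x) = x) {t : K} (ht : t * σ t = 1) :
    ∃ a : K, a ≠ 0 ∧ σ a = t * a := by
  -- `b + σ t * σ b` is a solution for every `b`; `b = 1` fails only when `t = -1`
  by_cases ht1 : t = -1
  · obtain ⟨b, hb⟩ := hσ
    refine ⟨b - σ b, sub_ne_zero.mpr (Ne.symm hb), ?_⟩
    rw [map_sub, hσσ, ht1]
    ring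
  · refine ⟨1 + σ t, fun h0 => ht1 ?_, ?_⟩
    · rw [← hσσ t, eq_neg_of_add_eq_zero_right h0, map_neg, map_one]
    · rw [map_add, map_one, hσσ, mul_add, mul_one, ht]
      ring

section Quadratic

variable {F K : Type*} [Field F] [Field K] [Algebra F K] [FiniteDimensional F K] [IsGalois F K]

theorem AlgEquiv.apply_apply_of_finrank_eq_two (hdeg : Module.finrank F K = 2) (σ : K ≃ₐ[F] K)
    (x : K) : σ (σ x) = x := by
  have hσσ : σ ^ 2 = 1 := by
    rw [← hdeg, ← IsGalois.card_aut_eq_finrank]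
    exact pow_card_eq_one'
  rw [← AlgEquiv.mul_apply, ← sq, hσσ, AlgEquiv.one_apply]

theorem AlgEquiv.mem_range_algebraMap_of_finrank_eq_two (hdeg : Module.finrank F K = 2)
    {σ : K ≃ₐ[F] K} (hσ : σ ≠ 1) {x : K} (hx : σ x = x) : x ∈ Set.range (algebraMap F K) := by
  have hgen : Subgroup.zpowers σ = ⊤ := by
    apply zpowers_eq_top_of_prime_card (p := 2) _ hσ
    rw [IsGalois.card_aut_eq_finrank, hdeg]
  rw [IsGalois.mem_range_algebraMap_iff_fixed]
  intro τ
  obtain ⟨j, rfl⟩ := Subgroup.mem_zpowers_iff.mp (hgen ▸ Subgroup.mem_top τ)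
  exact MulAction.mem_fixedBy_zpow (g := σ) hx j

theorem Matrix.exists_map_algebraMap_eq_of_finrank_eq_two (hdeg : Module.finrank F K = 2)
    {m n : Type*} {σ : K ≃ₐ[F] K} (hσ : σ ≠ 1) {M : Matrix m n K} (hM : M.map σ = M) :
    ∃ g : Matrix m n F, g.map (algebraMap F K) = M := by
  choose g hg using fun i j =>
    σ.mem_range_algebraMap_of_finrank_eq_two hdeg hσ (congrFun (congrFun hM i) j)
  exact ⟨Matrix.of g, Matrix.ext hg⟩

end Quadratic

def IsUnitarySimilitude {K G : Type*} [CommRing K] [FunLike G K K] (σ : G)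
    (h : Matrix (Fin 2) (Fin 2) K) (c : K) : Prop :=
  (h.map σ)ᵀ * 𝕁 * h = c • 𝕁

namespace IsUnitarySimilitude

variable {K G : Type*} [Field K] [FunLike G K K] {σ : G} {h : Matrix (Fin 2) (Fin 2) K} {c : K}

theorem factor_unique {c' : K} (hc : IsUnitarySimilitude σ h c)
    (hc' : IsUnitarySimilitude σ h c') : c = c' := by
  simpa using congrFun (congrFun (hc.symm.trans hc') 0) 1

theorem ne_zero (hh : IsUnitarySimilitude σ h c) (hc : c ≠ 0) : h ≠ 0 := by
  rintro rfl
  exact hc (by simpa using (congrFun (congrFun hh 0) 1).symm)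

theorem map_eq_smul [RingHomClass G K K] (hh : IsUnitarySimilitude σ h c) (hc : c ≠ 0) :
    h.map σ = (c⁻¹ * σ h.det) • h := by
  have hdet : (h.map σ).det = σ h.det := ((σ : K →+* K).map_det h).symm
  rw [mul_smul, ← hdet, det_smul_eq_smul_of_transpose_mul_J_mul hh, smul_smul, inv_mul_cancel₀ hc,
    one_smul]

end IsUnitarySimilitude

theorem isUnitarySimilitude_smul_map_algebraMap {F K G : Type*} [CommRing F] [CommRing K]
    [Algebra F K] [FunLike G K K] [AlgHomClass G F K K] (σ : G) (a : K)
    (g : Matrix (Fin 2) (Fin 2) F) :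
    IsUnitarySimilitude σ (a • g.map (algebraMap F K)) (a * σ a * algebraMap F K g.det) := by
  have hmap : (a • g.map (algebraMap F K)).map σ = σ a • g.map (algebraMap F K) := by
    ext i j
    simp [AlgHomClass.commutes]
  have hdet : (g.map (algebraMap F K)).det = algebraMap F K g.det :=
    ((algebraMap F K).map_det g).symm
  rw [IsUnitarySimilitude, hmap, transpose_smul, smul_mul, smul_mul, Matrix.mul_smul,
    transpose_mul_J_mul_self, hdet, smul_smul, smul_smul, mul_comm (σ a) a]

theorem IsUnitarySimilitude.exists_eq_smul_map_algebraMap {F K : Type*} [Field F] [Field K]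
    [Algebra F K] [FiniteDimensional F K] [IsGalois F K] (hdeg : Module.finrank F K = 2)
    {σ : K ≃ₐ[F] K} (hσ : σ ≠ 1) {h : Matrix (Fin 2) (Fin 2) K} {c : K}
    (hh : IsUnitarySimilitude σ h c) (hc : c ≠ 0) :
    ∃ a : K, a ≠ 0 ∧ ∃ g : Matrix (Fin 2) (Fin 2) F, h = a • g.map (algebraMap F K) := by
  set t := c⁻¹ * σ h.det
  have hσσ := σ.apply_apply_of_finrank_eq_two hdeg
  have hconj : h.map σ = t • h := hh.map_eq_smul hc
  have hnorm : t * σ t = 1 := by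
    have h_eq_smul : h = (σ t * t) • h :=
      calc h = (h.map σ).map σ := by ext i j; simp [hσσ]
        _ = (σ t * t) • h := by rw [hconj, Matrix.map_smul' _ _ _ (map_mul σ), hconj, smul_smul]
    rw [mul_comm]
    exact (smul_left_injective K (hh.ne_zero hc)) (by simpa using h_eq_smul.symm)
  have hσ_moves : ∃ b, σ b ≠ b := by
    by_contra! hfix
    exact hσ (AlgEquiv.ext hfix)
  obtain ⟨a, ha, hσa⟩ := exists_ne_zero_apply_eq_mul hσ_moves hσσ hnorm
  have hfixed : (a⁻¹ • h).map σ = a⁻¹ • h := by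
    rw [Matrix.map_smul' _ _ _ (map_mul σ), hconj, smul_smul, map_inv₀, hσa, _root_.mul_inv_rev,
      inv_mul_cancel_right₀ (left_ne_zero_of_mul_eq_one hnorm)]
  obtain ⟨g, hg⟩ := Matrix.exists_map_algebraMap_eq_of_finrank_eq_two hdeg hσ hfixed
  exact ⟨a, ha, g, by rw [hg, smul_smul, mul_inv_cancel₀ ha, one_smul]⟩

/-- The `F`-points of the unitary similitude group `GU(1,1)` of a quadratic Galois extension
`K/F` are exactly `K^× · GL₂(F)`: a matrix `h ∈ M₂(K)` satisfies
`(transpose σ(h))·J·h = ν·J` with `ν ∈ F^×` iff `h = a·g` with `a ∈ K^×`, `g ∈ GL₂(F)`,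
and then `ν = a·σ(a)·det g`. -/
theorem gu11_points {F K : Type*} [Field F] [Field K] [Algebra F K] [IsGalois F K]
    (hdeg : Module.finrank F K = 2) (σ : K ≃ₐ[F] K) (hσ : σ ≠ AlgEquiv.refl) :
    (∀ (h : Matrix (Fin 2) (Fin 2) K) (ν : F), ν ≠ 0 →
      (h.map ⇑σ)ᵀ * !![0, 1; -1, 0] * h = algebraMap F K ν • !![0, 1; -1, 0] →
      ∃ (a : K) (g : Matrix (Fin 2) (Fin 2) F), a ≠ 0 ∧ g.det ≠ 0 ∧
        h = a • g.map (algebraMap F K) ∧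
        algebraMap F K ν = a * σ a * algebraMap F K g.det) ∧
    (∀ (a : K) (g : Matrix (Fin 2) (Fin 2) F), a ≠ 0 → g.det ≠ 0 →
      ((a • g.map (algebraMap F K)).map ⇑σ)ᵀ * !![0, 1; -1, 0]
          * (a • g.map (algebraMap F K))
        = (a * σ a * algebraMap F K g.det) • !![0, 1; -1, 0]) := by
  have : FiniteDimensional F K := .of_finrank_pos (by omega)
  refine ⟨fun h ν hν hh => ?_, fun a g _ _ => isUnitarySimilitude_smul_map_algebraMap σ a g⟩
  have hc : algebraMap F K ν ≠ 0 := (map_ne_zero _).mpr hν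
  obtain ⟨a, ha, g, rfl⟩ := IsUnitarySimilitude.exists_eq_smul_map_algebraMap hdeg hσ hh hc
  have hfactor : algebraMap F K ν = a * σ a * algebraMap F K g.det :=
    (isUnitarySimilitude_smul_map_algebraMap σ a g).factor_unique hh |>.symm
  refine ⟨a, g, ha, fun hg => hc ?_, rfl, hfactor⟩
  rw [hfactor, hg, map_zero, mul_zero]
end

section
/- Let K/F be a Galois field extension of degree 2 with nontrivial automorphism σ and J = !![0, 1; −1, 0]. Let h = !![𝔞, 𝔟; 𝔠, 𝔡] ∈ M₂(K) satisfy (transpose σ(h))·J·h = ν·J with ν ∈ F, ν ≠ 0. Then: (i) if 𝔞 ≠ 0, J·h = !![1, −𝔠·𝔞⁻¹; 0, 1] · !![0, ν·σ(𝔞)⁻¹; −𝔞, 0] · !![1, 𝔞⁻¹·𝔟; 0, 1]; and (ii) if 𝔟 ≠ 0, J·h = !![1, −𝔡·𝔟⁻¹; 0, 1] · J · !![0, 𝔟; −ν·σ(𝔟)⁻¹, 0] · !![1, 0; 𝔟⁻¹·𝔞, 1]. -/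
open Matrix

/-- The Bruhat-type factorizations of `J·h` for a unitary similitude
`h = !![𝔞, 𝔟; 𝔠, 𝔡]` of `GU(1,1)` over a quadratic Galois extension `K/F`. -/
theorem gu11_bruhat_factorizations {F K : Type*} [Field F] [Field K] [Algebra F K]
    [IsGalois F K] (hdeg : Module.finrank F K = 2) (σ : K ≃ₐ[F] K) (hσ : σ ≠ AlgEquiv.refl)
    (𝔞 𝔟 𝔠 𝔡 : K) (ν : F) (hν : ν ≠ 0)
    (hrel : ((!![𝔞, 𝔟; 𝔠, 𝔡] : Matrix (Fin 2) (Fin 2) K).map ⇑σ)ᵀ * !![0, 1; -1, 0]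
          * !![𝔞, 𝔟; 𝔠, 𝔡] = algebraMap F K ν • !![0, 1; -1, 0]) :
    (𝔞 ≠ 0 →
      !![0, 1; -1, 0] * !![𝔞, 𝔟; 𝔠, 𝔡]
        = !![1, -(𝔠 * 𝔞⁻¹); 0, 1] * !![0, algebraMap F K ν * (σ 𝔞)⁻¹; -𝔞, 0]
            * !![1, 𝔞⁻¹ * 𝔟; 0, 1]) ∧
    (𝔟 ≠ 0 →
      !![0, 1; -1, 0] * !![𝔞, 𝔟; 𝔠, 𝔡]
        = !![1, -(𝔡 * 𝔟⁻¹); 0, 1] * !![0, 1; -1, 0]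
            * !![0, 𝔟; -(algebraMap F K ν * (σ 𝔟)⁻¹), 0] * !![1, 0; 𝔟⁻¹ * 𝔞, 1]) := by
  set N := algebraMap F K ν with hN
  have e00 := congrFun (congrFun hrel 0) 0
  have e01 := congrFun (congrFun hrel 0) 1
  have e10 := congrFun (congrFun hrel 1) 0
  have e11 := congrFun (congrFun hrel 1) 1
  simp only [Matrix.mul_apply, Fin.sum_univ_two, Matrix.smul_apply, smul_eq_mul,
    Matrix.transpose_apply, Matrix.map_apply] at e00 e01 e10 e11
  simp at e00 e01 e10 e11
  refine ⟨fun ha => ?_, fun hb => ?_⟩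
  · have hsa : σ 𝔞 ≠ 0 := by simpa using ha
    have key : 𝔡 = 𝔠 * 𝔞⁻¹ * 𝔟 + N * (σ 𝔞)⁻¹ := by
      field_simp
      linear_combination 𝔞 * e01 - 𝔟 * e00
    ext i j
    fin_cases i <;> fin_cases j <;>
      simp [Matrix.mul_apply, Fin.sum_univ_two, key] <;> field_simp <;> ring
  · have hsb : σ 𝔟 ≠ 0 := by simpa using hb
    have key : 𝔠 = 𝔡 * 𝔟⁻¹ * 𝔞 - N * (σ 𝔟)⁻¹ := by
      field_simp
      linear_combination 𝔟 * e10 - 𝔞 * e11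
    ext i j
    fin_cases i <;> fin_cases j <;>
      simp [Matrix.mul_apply, Fin.sum_univ_two, key] <;> field_simp <;> ring
end

section
/- Let K be a field of characteristic ≠ 2. Let A, C ∈ M₂(K) with C invertible and A·C⁻¹ symmetric. Let α, ᾱ, 𝔞, 𝔠 ∈ K and 𝕔 ∈ K with 𝕔 ≠ 0, and set 𝕊 = !![𝕔·α·ᾱ, 𝕔·(α+ᾱ)/2; 𝕔·(α+ᾱ)/2, 𝕔] ∈ M₂(K). Then the 3×3 matrix ℭ with block form [[C, u],[v, 𝔠]], where u is the column −𝔞·(ᾱ, 1)ᵀ and v is the row −(α, 1)·A, satisfies det ℭ = (det C) · (𝔠 − 𝔞·𝕔⁻¹·trace(𝕊·A·C⁻¹)). -/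
open Matrix

/-- The determinant computation `det ℭ = det C · (𝔠 − 𝔞·𝕔⁻¹·Tr(𝕊·A·C⁻¹))` for the 3×3 block
matrix `ℭ = [[C, −𝔞·(β,1)ᵀ], [−(α,1)·A, 𝔠]]` appearing in the local zeta integrals. -/
theorem det_block_bessel {K : Type*} [Field K] (h2 : (2 : K) ≠ 0)
    (A C : Matrix (Fin 2) (Fin 2) K) (hC : IsUnit C) (hsym : (A * C⁻¹)ᵀ = A * C⁻¹)
    (α β 𝔞 𝔠 𝕔 : K) (h𝕔 : 𝕔 ≠ 0) :
    (Matrix.fromBlocks C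
        (Matrix.of fun i (_ : Fin 1) => -𝔞 * ![β, 1] i)
        (Matrix.of fun (_ : Fin 1) j => -(α * A 0 j + A 1 j))
        (Matrix.of fun (_ : Fin 1) (_ : Fin 1) => 𝔠)).det
      = C.det * (𝔠 - 𝔞 * 𝕔⁻¹
          * (!![𝕔 * α * β, 𝕔 * (α + β) / 2; 𝕔 * (α + β) / 2, 𝕔] * (A * C⁻¹)).trace) := by
  have hM : (A * C⁻¹) 0 1 = (A * C⁻¹) 1 0 := by
    have := congrFun (congrFun hsym 0) 1
    simpa [Matrix.transpose_apply] using this.symm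
  haveI : Invertible C := C.invertibleOfIsUnitDet (isUnit_iff_isUnit_det C |>.mp hC)
  rw [Matrix.det_fromBlocks₁₁, Matrix.invOf_eq_nonsing_inv]
  congr 1
  rw [Matrix.det_fin_one]
  have hv : (Matrix.of fun (_ : Fin 1) j => -(α * A 0 j + A 1 j))
      = -((Matrix.of fun (_ : Fin 1) i => ![α, 1] i) * A) := by
    ext i j
    simp [Matrix.mul_apply, Fin.sum_univ_two]
  rw [hv, Matrix.neg_mul, Matrix.neg_mul, Matrix.mul_assoc _ A C⁻¹]
  set M := A * C⁻¹ with hMdef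
  simp only [Matrix.sub_apply, Matrix.neg_apply, Matrix.mul_apply, Matrix.of_apply,
    Fin.sum_univ_two, Fin.sum_univ_one, Matrix.trace_fin_two,
    Matrix.cons_val_zero, Matrix.cons_val_one, Matrix.head_cons, Matrix.cons_val',
    Matrix.empty_val', Matrix.cons_val_fin_one, one_mul]
  rw [hM]
  field_simp
  ring
end

section
/- The map from the quadratic F-algebra E = F[X]/(X² − (b/c)·X + (a/c)) to M₂(F) sending the class of x + y·X to M(x,y) is an injective F-algebra homomorphism, and it restricts to a group isomorphism from the unit group E^× onto the similitude group T_𝕊 = {A ∈ M₂(F) : det A ≠ 0 and (transpose A)·𝕊·A = (det A)·𝕊}. -/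
open Matrix Polynomial

/-!
`E` is spanned by `1` and the class `ω` of `X`, and `x + yω ↦ M(x,y)` is the algebra map sending
`ω` to the companion matrix `!![b/c, 1; -a/c, 0]` of the defining polynomial. Since
`det A • (Aᵀ)⁻¹ = adjugate Aᵀ`, the similitude condition `Aᵀ 𝕊 A = det A • 𝕊` on an invertible `A`
is equivalent to the *linear* condition `𝕊 A = adjugate Aᵀ 𝕊`, whose solutions are exactly the
matrices `M(x,y)`. Finally `E` is finite-dimensional, so an element whose image is invertible is not
a zero divisor, hence a unit.
-/

theorem Matrix.transpose_mul_mul_eq_det_smul_iff {n R : Type*} [Fintype n] [DecidableEq n]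
    [CommRing R] {S A : Matrix n n R} (hA : IsUnit A.det) :
    Aᵀ * S * A = A.det • S ↔ S * A = adjugate Aᵀ * S := by
  have adjugate_mul_transpose : adjugate Aᵀ * Aᵀ = A.det • 1 := by
    rw [adjugate_mul, det_transpose]
  have transpose_mul_adjugate : Aᵀ * adjugate Aᵀ = A.det • 1 := by
    rw [mul_adjugate, det_transpose]
  constructor
  · intro h
    rw [← hA.smul_left_cancel]
    calc A.det • (S * A) = adjugate Aᵀ * (Aᵀ * S * A) := by
          rw [← smul_one_mul, ← adjugate_mul_transpose, mul_assoc, mul_assoc]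
      _ = A.det • (adjugate Aᵀ * S) := by rw [h, mul_smul_comm]
  · intro h
    rw [mul_assoc, h, ← mul_assoc, transpose_mul_adjugate, smul_one_mul]

theorem Matrix.mul_eq_adjugate_transpose_mul_iff_fin_two {F : Type*} [Field F]
    (h2 : (2 : F) ≠ 0) {a b c : F} (hc : c ≠ 0) (A : Matrix (Fin 2) (Fin 2) F) :
    !![a, b / 2; b / 2, c] * A = adjugate Aᵀ * !![a, b / 2; b / 2, c] ↔
      ∃ x y : F, A = !![x + y * b * c⁻¹, y; -y * a * c⁻¹, x] := by
  obtain ⟨p, q, r, s, rfl⟩ : ∃ p q r s, A = !![p, q; r, s] := ⟨_, _, _, _, eta_fin_two A⟩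
  simp only [adjugate_fin_two, transpose_apply, of_apply, cons_val', cons_val_zero, cons_val_one,
    cons_val_fin_one, mul_fin_two, EmbeddingLike.apply_eq_iff_eq, vecCons_inj, and_true,
    existsAndEq, exists_eq_right_right']
  constructor
  · rintro ⟨-, h10, h11⟩
    field_simp at h10 h11 ⊢
    exact ⟨mul_left_cancel₀ h2 (by linear_combination -h11),
      mul_left_cancel₀ h2 (by linear_combination h10)⟩
  · rintro ⟨rfl, rfl⟩
    refine ⟨⟨?_, ?_⟩, ?_, ?_⟩ <;> field_simp <;> ring

theorem AlgHom.isUnit_of_isUnit_apply_of_injective {K A B : Type*} [Field K] [Ring A] [Ring B]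
    [Algebra K A] [Algebra K B] [Algebra.IsIntegral K A] (φ : A →ₐ[K] B)
    (hφ : Function.Injective φ) {a : A} (ha : IsUnit (φ a)) : IsUnit a := by
  refine IsArtinianRing.isUnit_of_isIntegral_of_nonZeroDivisor
    (Algebra.IsIntegral.isIntegral (R := K) a) (mem_nonZeroDivisors_iff.mpr ⟨?_, ?_⟩) <;>
  · intro y hy
    rw [← map_eq_zero_iff φ hφ] at hy ⊢
    simpa [ha.mul_right_eq_zero, ha.mul_left_eq_zero] using hy

section QuadraticAlgebra

variable {R : Type*} [CommRing R] (p q : R)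

theorem Polynomial.monic_X_pow_two_sub_C_mul_X_add_C : (X ^ 2 - C p * X + C q).Monic := by
  monicity!

variable [Nontrivial R]

theorem AdjoinRoot.exists_mk_C_add_C_mul_X_eq {f : R[X]} (hf : f.Monic) (hdeg : f.degree ≤ 2)
    (z : AdjoinRoot f) : ∃ x y : R, mk f (C x + C y * X) = z := by
  obtain ⟨g, rfl⟩ := mk_surjective z
  have hlin : (g %ₘ f).degree ≤ 1 :=
    Order.le_of_lt_succ ((degree_modByMonic_lt g hf).trans_le hdeg)
  refine ⟨(g %ₘ f).coeff 0, (g %ₘ f).coeff 1, ?_⟩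
  rw [add_comm, ← eq_X_add_C_of_degree_le_one hlin]
  exact mk_leftInverse hf (mk f g)

theorem AdjoinRoot.exists_mk_C_add_C_mul_X_eq_of_quadratic
    (z : AdjoinRoot (X ^ 2 - C p * X + C q)) : ∃ x y : R, mk _ (C x + C y * X) = z :=
  exists_mk_C_add_C_mul_X_eq (monic_X_pow_two_sub_C_mul_X_add_C p q) (by compute_degree) z

theorem aeval_companion_quadratic :
    aeval !![p, 1; -q, 0] (X ^ 2 - C p * X + C q) = 0 := by
  simpa [charpoly_fin_two] using aeval_self_charpoly !![p, 1; -q, 0]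

noncomputable def quadraticAlgebraToMatrix :
    AdjoinRoot (X ^ 2 - C p * X + C q) →ₐ[R] Matrix (Fin 2) (Fin 2) R :=
  Ideal.Quotient.liftₐ _ (aeval !![p, 1; -q, 0]) fun g hg => by
    obtain ⟨g, rfl⟩ := Ideal.mem_span_singleton'.mp hg
    rw [map_mul, aeval_companion_quadratic, mul_zero]

theorem quadraticAlgebraToMatrix_mk_C_add_C_mul_X (x y : R) :
    quadraticAlgebraToMatrix p q (AdjoinRoot.mk _ (C x + C y * X)) =
      !![x + y * p, y; -y * q, x] := by
  change aeval !![p, 1; -q, 0] (C x + C y * X) = _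
  ext i j
  fin_cases i <;> fin_cases j <;> simp [algebraMap_eq_diagonal]

theorem quadraticAlgebraToMatrix_injective :
    Function.Injective (quadraticAlgebraToMatrix p q) := by
  rw [injective_iff_map_eq_zero]
  intro z hz
  obtain ⟨x, y, rfl⟩ := AdjoinRoot.exists_mk_C_add_C_mul_X_eq_of_quadratic p q z
  rw [quadraticAlgebraToMatrix_mk_C_add_C_mul_X] at hz
  have hy : y = 0 := by simpa using congrFun (congrFun hz 0) 1
  have hx : x = 0 := by simpa using congrFun (congrFun hz 1) 1
  simp [hx, hy]

end QuadraticAlgebra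

theorem quadratic_algebra_iso_similitude_general {F : Type*} [Field F] (h2 : (2 : F) ≠ 0)
    (a b c : F) (hc : c ≠ 0) :
    ∃ φ : AdjoinRoot (X ^ 2 - Polynomial.C (b / c) * X + Polynomial.C (a / c))
        →ₐ[F] Matrix (Fin 2) (Fin 2) F,
      (∀ x y : F,
        φ (AdjoinRoot.mk (X ^ 2 - Polynomial.C (b / c) * X + Polynomial.C (a / c))
            (Polynomial.C x + Polynomial.C y * X))
          = !![x + y * b * c⁻¹, y; -y * a * c⁻¹, x]) ∧
      Function.Injective φ ∧
      ⇑φ '' {e | IsUnit e}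
        = {A : Matrix (Fin 2) (Fin 2) F |
            A.det ≠ 0 ∧ Aᵀ * !![a, b / 2; b / 2, c] * A = A.det • !![a, b / 2; b / 2, c]} := by
  set φ := quadraticAlgebraToMatrix (b / c) (a / c)
  have hφ (x y : F) :
      φ (AdjoinRoot.mk _ (C x + C y * X)) = !![x + y * b * c⁻¹, y; -y * a * c⁻¹, x] := by
    rw [quadraticAlgebraToMatrix_mk_C_add_C_mul_X]
    simp only [div_eq_mul_inv, mul_assoc, neg_mul]
  have hinj := quadraticAlgebraToMatrix_injective (b / c) (a / c)
  have := (monic_X_pow_two_sub_C_mul_X_add_C (b / c) (a / c)).finite_adjoinRoot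
  refine ⟨φ, hφ, hinj, Set.ext fun A => ⟨?_, ?_⟩⟩
  · rintro ⟨e, he, rfl⟩
    obtain ⟨x, y, rfl⟩ := AdjoinRoot.exists_mk_C_add_C_mul_X_eq_of_quadratic _ _ e
    have hdet : IsUnit (φ _).det := (isUnit_iff_isUnit_det _).mp (he.map φ)
    exact ⟨hdet.ne_zero, (transpose_mul_mul_eq_det_smul_iff hdet).mpr
      ((mul_eq_adjugate_transpose_mul_iff_fin_two h2 hc _).mpr ⟨x, y, hφ x y⟩)⟩
  · rintro ⟨hdet, hsim⟩
    obtain ⟨x, y, rfl⟩ := (mul_eq_adjugate_transpose_mul_iff_fin_two h2 hc A).mp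
      ((transpose_mul_mul_eq_det_smul_iff hdet.isUnit).mp hsim)
    rw [← hφ] at hdet ⊢
    exact ⟨_, φ.isUnit_of_isUnit_apply_of_injective hinj
      ((isUnit_iff_isUnit_det _).mpr hdet.isUnit), rfl⟩

/-- The quadratic algebra `E = F[X]/(X² − (b/c)X + (a/c))` embeds into `M₂(F)` via
`x + yX ↦ M(x,y)`, injectively, and the image of the unit group `E^×` is exactly the
similitude group `T_𝕊` of `𝕊 = !![a, b/2; b/2, c]`. -/
theorem quadratic_algebra_iso_similitude {F : Type*} [Field F] (h2 : (2 : F) ≠ 0)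
    (a b c : F) (hc : c ≠ 0) (hdisc : b ^ 2 - 4 * a * c ≠ 0) :
    ∃ φ : AdjoinRoot (X ^ 2 - Polynomial.C (b / c) * X + Polynomial.C (a / c))
        →ₐ[F] Matrix (Fin 2) (Fin 2) F,
      (∀ x y : F,
        φ (AdjoinRoot.mk (X ^ 2 - Polynomial.C (b / c) * X + Polynomial.C (a / c))
            (Polynomial.C x + Polynomial.C y * X))
          = !![x + y * b * c⁻¹, y; -y * a * c⁻¹, x]) ∧
      Function.Injective φ ∧
      ⇑φ '' {e | IsUnit e}
        = {A : Matrix (Fin 2) (Fin 2) F |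
            A.det ≠ 0 ∧ Aᵀ * !![a, b / 2; b / 2, c] * A = A.det • !![a, b / 2; b / 2, c]} :=
  quadratic_algebra_iso_similitude_general h2 a b c hc
end
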